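/- For every (u,v) ∈ [0,∞)², every p ∈ [1,2) and every i ∈ {1,2}, one has ∫_E x_i^p Q_{(u,v)}(dx) ≤ |u² − v²|^{p/2} + 2^{p/2}(uv)^{p/2} / cos(pπ/4) < ∞. -/

import Mathlib

open MeasureTheory ProbabilityTheory Filter Set
open scoped ENNReal NNReal Topology

noncomputable section

/-- `E`, the boundary of the closed first quadrant: `([0,∞)×{0}) ∪ ({0}×[0,∞))`. -/
def Eset : Set (ℝ × ℝ) := {p | (0 ≤ p.1 ∧ p.2 = 0) ∨ (p.1 = 0 ∧ 0 ≤ p.2)}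

/-- The open first quadrant `(0,∞)²`. -/
def openQuad : Set (ℝ × ℝ) := {p | 0 < p.1 ∧ 0 < p.2}

/-- The closed first quadrant `[0,∞)²`. -/
def closedQuad : Set (ℝ × ℝ) := {p | 0 ≤ p.1 ∧ 0 ≤ p.2}

/-- Density of the harmonic measure `Q_(u,v)` on the horizontal part of `E`. -/
def qdensH (u v ubar : ℝ) : ℝ :=
  (4 / Real.pi) * (u * v * ubar) / (4 * u ^ 2 * v ^ 2 + (ubar ^ 2 + v ^ 2 - u ^ 2) ^ 2)

/-- Density of the harmonic measure `Q_(u,v)` on the vertical part of `E`. -/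
def qdensV (u v vbar : ℝ) : ℝ :=
  (4 / Real.pi) * (u * v * vbar) / (4 * u ^ 2 * v ^ 2 + (vbar ^ 2 + u ^ 2 - v ^ 2) ^ 2)

/-- The harmonic measure `Q_x` of planar Brownian motion in the first quadrant:
for `x` in the open quadrant it has the explicit densities on the two parts of `E`,
and `Q_x = δ_x` otherwise (in particular for `x ∈ E`). -/
def Qmeas (x : ℝ × ℝ) : Measure (ℝ × ℝ) :=
  if 0 < x.1 ∧ 0 < x.2 then
    (((volume.restrict (Ici (0 : ℝ))).withDensity fun ubar =>
        ENNReal.ofReal (qdensH x.1 x.2 ubar)).map fun ubar : ℝ => (ubar, (0 : ℝ)))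
      + (((volume.restrict (Ici (0 : ℝ))).withDensity fun vbar =>
        ENNReal.ofReal (qdensV x.1 x.2 vbar)).map fun vbar : ℝ => ((0 : ℝ), vbar))
  else Measure.dirac x

/-- The lozenge product `x ◊ y = −(x₁+x₂)(y₁+y₂) + i(x₁−x₂)(y₁−y₂)`. -/
def loz (x y : ℝ × ℝ) : ℂ :=
  -((((x.1 + x.2) * (y.1 + y.2) : ℝ)) : ℂ)
    + Complex.I * ((((x.1 - x.2) * (y.1 - y.2) : ℝ)) : ℂ)

/-- The self-duality function `F(x,y) = exp(x ◊ y)`. -/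
def Fdual (x y : ℝ × ℝ) : ℂ := Complex.exp (loz x y)

/-- The σ-finite measure `ν` on `E`, the vague limit of `ε⁻¹ Q_(1,ε)`. -/
def nuMeas : Measure (ℝ × ℝ) :=
  (((volume.restrict (Ici (0 : ℝ))).withDensity fun u =>
      ENNReal.ofReal ((4 / Real.pi) * u / ((1 - u) ^ 2 * (1 + u) ^ 2))).map
    fun u : ℝ => (u, (0 : ℝ)))
  + (((volume.restrict (Ici (0 : ℝ))).withDensity fun v =>
      ENNReal.ofReal ((4 / Real.pi) * v / (1 + v ^ 2) ^ 2)).map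
    fun v : ℝ => ((0 : ℝ), v))

/-- A planar Brownian motion started at `b`: continuous paths, `B 0 = b` a.s., the two
centered coordinate processes are independent, have independent increments
(each increment is independent of the past of the whole path), and Gaussian increments
`B i t − B i s ∼ N(0, t − s)`. -/
structure IsPlanarBM {Ω : Type*} [MeasurableSpace Ω] (P : Measure Ω)
    (B : ℝ → Ω → ℝ × ℝ) (b : ℝ × ℝ) : Prop where
  meas : ∀ t : ℝ, Measurable (B t)
  cont : ∀ ω, Continuous fun t => B t ω
  init : ∀ᵐ ω ∂P, B 0 ω = b
  indep_coords : IndepFun (fun ω => fun t : ℝ => (B t ω).1 - b.1)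
      (fun ω => fun t : ℝ => (B t ω).2 - b.2) P
  gauss_fst : ∀ s t : ℝ, 0 ≤ s → s ≤ t →
      P.map (fun ω => (B t ω).1 - (B s ω).1) = gaussianReal 0 (Real.toNNReal (t - s))
  gauss_snd : ∀ s t : ℝ, 0 ≤ s → s ≤ t →
      P.map (fun ω => (B t ω).2 - (B s ω).2) = gaussianReal 0 (Real.toNNReal (t - s))
  indepIncr_fst : ∀ s t : ℝ, 0 ≤ s → s ≤ t →
      IndepFun (fun ω => (B t ω).1 - (B s ω).1) (fun ω => fun r : ℝ => B (min r s) ω) P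
  indepIncr_snd : ∀ s t : ℝ, 0 ≤ s → s ≤ t →
      IndepFun (fun ω => (B t ω).2 - (B s ω).2) (fun ω => fun r : ℝ => B (min r s) ω) P

/-- The first positive time at which the path `f` leaves the set `S`
(`sInf ∅ = 0` by convention; the infimum is attained in `ℝ` whenever the set is nonempty). -/
def exitTime (f : ℝ → ℝ × ℝ) (S : Set (ℝ × ℝ)) : ℝ := sInf {t : ℝ | 0 < t ∧ f t ∉ S}

/-- The rectangular cone `[−z₁,∞) × [−z₂,∞)` northeast of `−z`. -/
def cone (z : ℝ × ℝ) : Set (ℝ × ℝ) := Ici (-z.1) ×ˢ Ici (-z.2)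

/-- Partial derivative `∂₁ f` along the horizontal axis (one-sided at `0`). -/
def d1 (f : ℝ × ℝ → ℂ) (u : ℝ) : ℂ := derivWithin (fun t : ℝ => f (t, 0)) (Ici 0) u

/-- Partial derivative `∂₂ f` along the vertical axis (one-sided at `0`). -/
def d2 (f : ℝ × ℝ → ℂ) (v : ℝ) : ℂ := derivWithin (fun t : ℝ => f (0, t)) (Ici 0) v

/-- The space `C_l(E)`: continuous on `E` with equal finite limits along both axes. -/
def MemCl (g : ℝ × ℝ → ℂ) : Prop :=
  ContinuousOn g Eset ∧ ∃ L : ℂ, Tendsto (fun u : ℝ => g (u, 0)) atTop (𝓝 L) ∧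
    Tendsto (fun v : ℝ => g (0, v)) atTop (𝓝 L)

/-- The space `C_l²(E)` of twice differentiable elements of `C_l(E)`. -/
structure MemCl2 (f : ℝ × ℝ → ℂ) : Prop where
  contOn : ContinuousOn f Eset
  limits : ∃ L : ℂ, Tendsto (fun u : ℝ => f (u, 0)) atTop (𝓝 L) ∧
      Tendsto (fun v : ℝ => f (0, v)) atTop (𝓝 L)
  diff1 : ∀ u : ℝ, 0 ≤ u → DifferentiableWithinAt ℝ (fun t : ℝ => f (t, 0)) (Ici 0) u
  diff2 : ∀ v : ℝ, 0 ≤ v → DifferentiableWithinAt ℝ (fun t : ℝ => f (0, t)) (Ici 0) v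
  contd1 : ContinuousOn (d1 f) (Ici 0)
  contd2 : ContinuousOn (d2 f) (Ici 0)
  decay1 : Tendsto (fun u : ℝ => (u : ℂ) * d1 f u) atTop (𝓝 0)
  decay2 : Tendsto (fun v : ℝ => (v : ℂ) * d2 f v) atTop (𝓝 0)
  diff11 : ∀ u : ℝ, 0 < u → DifferentiableAt ℝ (d1 f) u
  diff22 : ∀ v : ℝ, 0 < v → DifferentiableAt ℝ (d2 f) v
  bdd2 : ∃ C : ℝ, ∀ r : ℝ, 0 < r → r * (‖deriv (d1 f) r‖ + ‖deriv (d2 f) r‖) ≤ C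

/-- `f†(x₁,x₂) := f(x₂,x₁)`. -/
def swapF (f : ℝ × ℝ → ℂ) : ℝ × ℝ → ℂ := fun x => f (x.2, x.1)

/-- The operator `G₂` (generator part for a drift in direction `(0,1)`). -/
def G2op (f : ℝ × ℝ → ℂ) (x : ℝ × ℝ) : ℂ :=
  if x.1 = 0 then d2 f x.2
  else ((x.1 : ℂ))⁻¹ *
    ∫ y, (f (x.1 • y) - f x - (((x.1 * (y.1 - 1)) : ℝ) : ℂ) * d1 f x.1) ∂nuMeas

/-- The operator `G₁ f := (G₂ f†)†`. -/
def G1op (f : ℝ × ℝ → ℂ) (x : ℝ × ℝ) : ℂ := G2op (swapF f) (x.2, x.1)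

/-- The generator `G^{c,θ} f(x) = c(θ₁−x₁)G₁f(x) + c(θ₂−x₂)G₂f(x)`. -/
def Gop (c : ℝ) (θ : ℝ × ℝ) (f : ℝ × ℝ → ℂ) (x : ℝ × ℝ) : ℂ :=
  (((c * (θ.1 - x.1) : ℝ)) : ℂ) * G1op f x + (((c * (θ.2 - x.2) : ℝ)) : ℂ) * G2op f x

end

open MeasureTheory Filter Set
open scoped ENNReal Topology

/-!
Under `s = x²` the horizontal part of `Q_(u,v)` becomes the Cauchy law with location `u² − v²`
and scale `2uv`, restricted to `s > 0`. Subadditivity of `s ↦ s^(p/2)` gives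
`x^p ≤ |u² − v²|^(p/2) + |x² − (u² − v²)|^(p/2)`, so the `p`-th moment is at most
`|u² − v²|^(p/2)` plus `(2uv)^(p/2)` times the absolute moment of order `p/2` of the standard
Cauchy law, which is `1 / cos (π p / 4)` by the beta integral and Euler's reflection formula.
The vertical coordinate follows from the symmetry `swap_* Q_(u,v) = Q_(v,u)`.
-/

open scoped Real

theorem Real.cos_pi_mul_div_two_pos {q : ℝ} (hq0 : -1 < q) (hq1 : q < 1) :
    0 < Real.cos (π * q / 2) :=
  Real.cos_pos_of_mem_Ioo ⟨by nlinarith [Real.pi_pos], by nlinarith [Real.pi_pos]⟩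

theorem Real.sq_rpow_div_two {x : ℝ} (hx : 0 ≤ x) (p : ℝ) : (x ^ 2) ^ (p / 2) = x ^ p := by
  rw [← Real.rpow_two, ← Real.rpow_mul hx]
  ring_nf

theorem Real.rpow_le_abs_rpow_add_abs_sub_rpow {s q : ℝ} (a : ℝ) (hs : 0 ≤ s) (hq0 : 0 ≤ q)
    (hq1 : q ≤ 1) : s ^ q ≤ |a| ^ q + |s - a| ^ q :=
  calc s ^ q ≤ (|a| + |s - a|) ^ q :=
        Real.rpow_le_rpow hs (by linarith [le_abs_self a, le_abs_self (s - a)]) hq0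
    _ ≤ |a| ^ q + |s - a| ^ q := Real.rpow_add_le_add_rpow (abs_nonneg _) (abs_nonneg _) hq0 hq1

theorem lintegral_comp_abs (g : ℝ → ℝ≥0∞) : ∫⁻ x, g |x| = 2 * ∫⁻ x in Ioi 0, g x := by
  have hpos : ∫⁻ x in Ioi 0, g |x| = ∫⁻ x in Ioi 0, g x :=
    setLIntegral_congr_fun measurableSet_Ioi fun x hx => by rw [abs_of_pos hx]
  have hneg : ∫⁻ x in Iic 0, g |x| = ∫⁻ x in Ioi 0, g x := by
    have h := lintegral_image_eq_lintegral_abs_deriv_mul (measurableSet_Ioi (a := (0 : ℝ)))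
      (fun x _ => (hasDerivAt_neg x).hasDerivWithinAt) neg_injective.injOn fun x => g |x|
    simpa [setLIntegral_congr (Iio_ae_eq_Iic (a := (0 : ℝ))), hpos] using h
  rw [← lintegral_add_compl _ measurableSet_Ioi, compl_Ioi, hpos, hneg, two_mul]

theorem lintegral_Ioo_rpow_mul_one_sub_rpow {α β : ℝ} (hα : 0 < α) (hβ : 0 < β) :
    ∫⁻ x in Ioo 0 1, ENNReal.ofReal (x ^ (α - 1) * (1 - x) ^ (β - 1))
      = ENNReal.ofReal (ProbabilityTheory.beta α β) := by
  have hB := beta_pos hα hβ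
  have h := lintegral_betaPDF_eq_one hα hβ
  simp_rw [lintegral_betaPDF, mul_assoc, ENNReal.ofReal_mul (one_div_pos.2 hB).le] at h
  rw [lintegral_const_mul' _ _ ENNReal.ofReal_ne_top,
    ← ENNReal.eq_div_iff (by simpa using hB) ENNReal.ofReal_ne_top] at h
  rw [h, ← ENNReal.ofReal_one, ← ENNReal.ofReal_div_of_pos (by positivity)]
  congr 1
  field_simp

theorem image_sq_div_one_add_sq_Ioi :
    (fun t : ℝ => t ^ 2 / (1 + t ^ 2)) '' Ioi 0 = Ioo 0 1 := by
  refine Subset.antisymm ?_ fun y hy => ?_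
  · rintro _ ⟨t, ht, rfl⟩
    have ht : 0 < t := ht
    exact ⟨by positivity, (div_lt_one (by positivity)).2 (by linarith)⟩
  · have hy' : 0 < 1 - y := by linarith [hy.2]
    refine ⟨√(y / (1 - y)), Real.sqrt_pos.2 (div_pos hy.1 hy'), ?_⟩
    simp only [Real.sq_sqrt (div_pos hy.1 hy').le]
    field_simp
    ring

theorem injOn_sq_div_one_add_sq : InjOn (fun t : ℝ => t ^ 2 / (1 + t ^ 2)) (Ioi 0) := by
  intro x hx y hy h
  have hx : 0 < x := hx
  have hy : 0 < y := hy
  rw [div_eq_div_iff (by positivity) (by positivity)] at h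
  nlinarith

/-- The substitution `t ↦ t² / (1 + t²)` turns the integral into `B((1 + q)/2, (1 − q)/2)`. -/
theorem lintegral_Ioi_rpow_div_one_add_sq {q : ℝ} (hq0 : -1 < q) (hq1 : q < 1) :
    ∫⁻ t in Ioi 0, ENNReal.ofReal (t ^ q / (1 + t ^ 2))
      = ENNReal.ofReal (π / (2 * Real.cos (π * q / 2))) := by
  set α := (q + 1) / 2 with hα
  have hα0 : 0 < α := by linarith
  have hβ0 : 0 < 1 - α := by linarith
  have hderiv : ∀ t ∈ Ioi (0 : ℝ), HasDerivWithinAt (fun t : ℝ => t ^ 2 / (1 + t ^ 2))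
      (2 * t / (1 + t ^ 2) ^ 2) (Ioi 0) t := fun t _ => by
    refine (((hasDerivAt_pow 2 t).div ((hasDerivAt_pow 2 t).const_add 1)
      (by positivity)).congr_deriv ?_).hasDerivWithinAt
    ring
  have hsubst := lintegral_Ioo_rpow_mul_one_sub_rpow hα0 hβ0
  rw [← image_sq_div_one_add_sq_Ioi, lintegral_image_eq_lintegral_abs_deriv_mul
    measurableSet_Ioi hderiv injOn_sq_div_one_add_sq] at hsubst
  have hpt : ∀ t ∈ Ioi (0 : ℝ), ENNReal.ofReal |2 * t / (1 + t ^ 2) ^ 2| *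
      ENNReal.ofReal ((t ^ 2 / (1 + t ^ 2)) ^ (α - 1) * (1 - t ^ 2 / (1 + t ^ 2)) ^ (1 - α - 1))
      = 2 * ENNReal.ofReal (t ^ q / (1 + t ^ 2)) := by
    intro t ht
    have ht : 0 < t := ht
    have hc : 0 < 1 + t ^ 2 := by positivity
    have e1 : (t ^ 2 / (1 + t ^ 2)) ^ (α - 1) = t ^ q / t / ((1 + t ^ 2) ^ α / (1 + t ^ 2)) := by
      rw [Real.div_rpow (sq_nonneg t) hc.le, Real.rpow_sub_one hc.ne', ← Real.rpow_two,
        ← Real.rpow_mul ht.le, show 2 * (α - 1) = q - 1 by linarith, Real.rpow_sub_one ht.ne']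
    have e2 : (1 - t ^ 2 / (1 + t ^ 2)) ^ (1 - α - 1) = (1 + t ^ 2) ^ α := by
      rw [show 1 - t ^ 2 / (1 + t ^ 2) = (1 + t ^ 2)⁻¹ by field_simp; ring,
        show 1 - α - 1 = -α by ring, Real.inv_rpow hc.le, Real.rpow_neg hc.le, inv_inv]
    rw [abs_of_pos (by positivity), ← ENNReal.ofReal_mul (by positivity), ← ENNReal.ofReal_ofNat,
      ← ENNReal.ofReal_mul zero_le_two, e1, e2]
    have : 0 < (1 + t ^ 2) ^ α := by positivity
    congr 1
    field_simp
  have hbeta : ProbabilityTheory.beta α (1 - α) = 2 * (π / (2 * Real.cos (π * q / 2))) := by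
    rw [ProbabilityTheory.beta, add_sub_cancel, Real.Gamma_one, div_one,
      Real.Gamma_mul_Gamma_one_sub, hα, show π * ((q + 1) / 2) = π * q / 2 + π / 2 by ring,
      Real.sin_add_pi_div_two]
    have := Real.cos_pi_mul_div_two_pos hq0 hq1
    field_simp
  rw [setLIntegral_congr_fun measurableSet_Ioi hpt, lintegral_const_mul' _ _ ENNReal.ofNat_ne_top,
    hbeta, ENNReal.ofReal_mul zero_le_two, ENNReal.ofReal_ofNat] at hsubst
  exact (ENNReal.mul_right_inj two_ne_zero ENNReal.ofNat_ne_top).1 hsubst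

theorem lintegral_cauchyPDF_mul_abs_rpow {q : ℝ} (hq0 : -1 < q) (hq1 : q < 1) :
    ∫⁻ w, cauchyPDF 0 1 w * ENNReal.ofReal (|w| ^ q)
      = ENNReal.ofReal (Real.cos (π * q / 2))⁻¹ := by
  have hcomp : ∀ w : ℝ, cauchyPDF 0 1 w * ENNReal.ofReal (|w| ^ q)
      = ENNReal.ofReal π⁻¹ * ENNReal.ofReal (|w| ^ q / (1 + |w| ^ 2)) := fun w => by
    rw [cauchyPDF, cauchyPDFReal, ← ENNReal.ofReal_mul (by positivity),
      ← ENNReal.ofReal_mul (by positivity), sq_abs]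
    congr 1
    simp only [sub_zero, NNReal.coe_one, one_pow, mul_one]
    ring
  have := Real.cos_pi_mul_div_two_pos hq0 hq1
  simp_rw [hcomp]
  rw [lintegral_comp_abs fun x => ENNReal.ofReal π⁻¹ * ENNReal.ofReal (x ^ q / (1 + x ^ 2)),
    lintegral_const_mul' _ _ ENNReal.ofReal_ne_top, lintegral_Ioi_rpow_div_one_add_sq hq0 hq1,
    ← ENNReal.ofReal_mul (by positivity), ← ENNReal.ofReal_ofNat,
    ← ENNReal.ofReal_mul zero_le_two]
  congr 1
  field_simp

theorem qdensV_eq_qdensH (u v y : ℝ) : qdensV u v y = qdensH v u y := by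
  unfold qdensV qdensH
  ring_nf

/-- `x ↦ (x² − (u² − v²)) / (2uv)` carries the horizontal density of `Q_(u,v)` on `(0, ∞)`
onto the standard Cauchy density on `(−(u² − v²)/(2uv), ∞)`. -/
theorem lintegral_Ioi_qdensH_mul_comp_sq_le {u v : ℝ} (hu : 0 < u) (hv : 0 < v)
    (f : ℝ → ℝ≥0∞) :
    ∫⁻ x in Ioi 0, ENNReal.ofReal (qdensH u v x) * f (x ^ 2)
      ≤ ∫⁻ w, cauchyPDF 0 1 w * f (u ^ 2 - v ^ 2 + 2 * u * v * w) := by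
  set φ : ℝ → ℝ := fun x => (x ^ 2 - (u ^ 2 - v ^ 2)) / (2 * u * v)
  have hderiv : ∀ x ∈ Ioi (0 : ℝ), HasDerivWithinAt φ (x / (u * v)) (Ioi 0) x := fun x _ => by
    refine ((((hasDerivAt_pow 2 x).sub_const _).div_const _).congr_deriv ?_).hasDerivWithinAt
    field_simp
    ring
  have hinj : InjOn φ (Ioi 0) := fun x hx y hy h => by
    have hx : 0 < x := hx
    have hy : 0 < y := hy
    have : x ^ 2 = y ^ 2 := by
      simpa [φ, div_left_inj' (by positivity : 2 * u * v ≠ 0)] using h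
    nlinarith
  calc ∫⁻ x in Ioi 0, ENNReal.ofReal (qdensH u v x) * f (x ^ 2)
      = ∫⁻ x in Ioi 0, ENNReal.ofReal |x / (u * v)| *
          (cauchyPDF 0 1 (φ x) * f (u ^ 2 - v ^ 2 + 2 * u * v * φ x)) := by
        refine setLIntegral_congr_fun measurableSet_Ioi fun x hx => ?_
        have hx : 0 < x := hx
        have hsq : u ^ 2 - v ^ 2 + 2 * u * v * φ x = x ^ 2 := by
          simp only [φ]
          field_simp
          ring
        rw [hsq, ← mul_assoc, cauchyPDF, ← ENNReal.ofReal_mul (abs_nonneg _)]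
        congr 2
        simp only [qdensH, cauchyPDFReal, φ, sub_zero, NNReal.coe_one, one_pow, mul_one,
          abs_of_pos (by positivity : 0 < x / (u * v))]
        field_simp
        ring
    _ = ∫⁻ w in φ '' Ioi 0, cauchyPDF 0 1 w * f (u ^ 2 - v ^ 2 + 2 * u * v * w) :=
        (lintegral_image_eq_lintegral_abs_deriv_mul measurableSet_Ioi hderiv hinj
          fun w => cauchyPDF 0 1 w * f (u ^ 2 - v ^ 2 + 2 * u * v * w)).symm
    _ ≤ _ := setLIntegral_le_lintegral _ _

theorem Qmeas_of_pos {u v : ℝ} (hu : 0 < u) (hv : 0 < v) :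
    Qmeas (u, v) =
      (((volume.restrict (Ici (0 : ℝ))).withDensity fun x =>
          ENNReal.ofReal (qdensH u v x)).map fun x : ℝ => (x, (0 : ℝ)))
        + (((volume.restrict (Ici (0 : ℝ))).withDensity fun y =>
          ENNReal.ofReal (qdensV u v y)).map fun y : ℝ => ((0 : ℝ), y)) :=
  if_pos ⟨hu, hv⟩

theorem map_swap_Qmeas (x : ℝ × ℝ) : (Qmeas x).map Prod.swap = Qmeas x.swap := by
  obtain ⟨u, v⟩ := x
  rw [Prod.swap_prod_mk]
  by_cases h : 0 < u ∧ 0 < v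
  · rw [Qmeas_of_pos h.1 h.2, Qmeas_of_pos h.2 h.1, Measure.map_add _ _ (by fun_prop),
      Measure.map_map (by fun_prop) (by fun_prop), Measure.map_map (by fun_prop) (by fun_prop),
      add_comm]
    simp only [Function.comp_def, Prod.swap_prod_mk, qdensV_eq_qdensH]
  · rw [Qmeas, if_neg h, Qmeas, if_neg (by simpa [and_comm] using h),
      Measure.map_dirac' measurable_swap, Prod.swap_prod_mk]

theorem lintegral_comp_fst_Qmeas_of_pos {u v : ℝ} (hu : 0 < u) (hv : 0 < v) {g : ℝ → ℝ≥0∞}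
    (hg : Measurable g) (hg0 : g 0 = 0) :
    ∫⁻ z, g z.1 ∂Qmeas (u, v) = ∫⁻ x in Ioi 0, ENNReal.ofReal (qdensH u v x) * g x := by
  rw [Qmeas_of_pos hu hv, lintegral_add_measure, lintegral_map (by fun_prop) (by fun_prop),
    lintegral_map (by fun_prop) (by fun_prop)]
  simp only [hg0, lintegral_zero, add_zero]
  rw [lintegral_withDensity_eq_lintegral_mul _ (by unfold qdensH; fun_prop) hg,
    setLIntegral_congr Ioi_ae_eq_Ici.symm]
  rfl

theorem lintegral_fst_rpow_Qmeas_le_of_pos {u v p : ℝ} (hu : 0 < u) (hv : 0 < v) (hp0 : 0 < p)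
    (hp2 : p < 2) :
    ∫⁻ z, ENNReal.ofReal (z.1 ^ p) ∂Qmeas (u, v)
      ≤ ENNReal.ofReal (|u ^ 2 - v ^ 2| ^ (p / 2)
          + (2 : ℝ) ^ (p / 2) * (u * v) ^ (p / 2) / Real.cos (p * π / 4)) := by
  set q := p / 2 with hq
  set a := u ^ 2 - v ^ 2
  have hq0 : 0 < q := by positivity
  have hq1 : q < 1 := by linarith
  have hscale : ∀ w, |a + 2 * u * v * w - a| ^ q = (2 * u * v) ^ q * |w| ^ q := fun w => by
    rw [add_sub_cancel_left, abs_mul, abs_of_pos (by positivity),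
      Real.mul_rpow (by positivity) (abs_nonneg _)]
  calc ∫⁻ z, ENNReal.ofReal (z.1 ^ p) ∂Qmeas (u, v)
      = ∫⁻ x in Ioi 0, ENNReal.ofReal (qdensH u v x) * ENNReal.ofReal (x ^ p) :=
        lintegral_comp_fst_Qmeas_of_pos hu hv (g := fun x => ENNReal.ofReal (x ^ p))
          (by fun_prop) (by simp [Real.zero_rpow hp0.ne'])
    _ ≤ ∫⁻ x in Ioi 0, ENNReal.ofReal (qdensH u v x) *
          (ENNReal.ofReal (|a| ^ q) + ENNReal.ofReal (|x ^ 2 - a| ^ q)) := by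
        refine setLIntegral_mono' measurableSet_Ioi fun x hx => mul_le_mul_right ?_ _
        rw [← ENNReal.ofReal_add (by positivity) (by positivity), ← Real.sq_rpow_div_two hx.le]
        exact ENNReal.ofReal_le_ofReal
          (Real.rpow_le_abs_rpow_add_abs_sub_rpow a (sq_nonneg x) hq0.le hq1.le)
    _ ≤ ∫⁻ w, cauchyPDF 0 1 w *
          (ENNReal.ofReal (|a| ^ q) + ENNReal.ofReal (|a + 2 * u * v * w - a| ^ q)) :=
        lintegral_Ioi_qdensH_mul_comp_sq_le hu hv
          fun s => ENNReal.ofReal (|a| ^ q) + ENNReal.ofReal (|s - a| ^ q)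
    _ = ENNReal.ofReal (|a| ^ q)
          + ENNReal.ofReal ((2 * u * v) ^ q) * ENNReal.ofReal (Real.cos (π * q / 2))⁻¹ := by
        simp_rw [hscale, ENNReal.ofReal_mul (by positivity : (0 : ℝ) ≤ (2 * u * v) ^ q),
          mul_add, mul_left_comm _ (ENNReal.ofReal ((2 * u * v) ^ q))]
        rw [lintegral_add_left (by fun_prop), lintegral_mul_const _ (by fun_prop),
          lintegral_cauchyPDF_eq_one 0 one_ne_zero, one_mul,
          lintegral_const_mul' _ _ ENNReal.ofReal_ne_top,
          lintegral_cauchyPDF_mul_abs_rpow (by linarith) hq1]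
    _ = _ := by
        have := Real.cos_pi_mul_div_two_pos (q := q) (by linarith) hq1
        rw [← ENNReal.ofReal_mul (by positivity),
          ← ENNReal.ofReal_add (by positivity) (by positivity), mul_assoc,
          Real.mul_rpow zero_le_two (by positivity), hq]
        ring_nf

theorem lintegral_fst_rpow_Qmeas_le {u v p : ℝ} (hu : 0 ≤ u) (hv : 0 ≤ v) (hp0 : 0 < p)
    (hp2 : p < 2) :
    ∫⁻ z, ENNReal.ofReal (z.1 ^ p) ∂Qmeas (u, v)
      ≤ ENNReal.ofReal (|u ^ 2 - v ^ 2| ^ (p / 2)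
          + (2 : ℝ) ^ (p / 2) * (u * v) ^ (p / 2) / Real.cos (p * π / 4)) := by
  by_cases h : 0 < u ∧ 0 < v
  · exact lintegral_fst_rpow_Qmeas_le_of_pos h.1 h.2 hp0 hp2
  rw [Qmeas, if_neg h, lintegral_dirac]
  rcases hu.eq_or_lt with rfl | hu
  · simp [Real.zero_rpow hp0.ne']
  obtain rfl : v = 0 := le_antisymm (not_lt.1 fun hv' => h ⟨hu, hv'⟩) hv
  refine le_of_eq (congrArg ENNReal.ofReal ?_)
  rw [mul_zero, Real.zero_rpow (by positivity), mul_zero, zero_div, add_zero,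
    zero_pow two_ne_zero, sub_zero, abs_of_nonneg (sq_nonneg u), Real.sq_rpow_div_two hu.le]

/-- for `(u,v) ∈ [0,∞)²`, `p ∈ [1,2)` and both coordinates `i`,
`∫_E x_i^p Q_{(u,v)}(dx) ≤ |u² − v²|^{p/2} + 2^{p/2}(uv)^{p/2}/cos(pπ/4) < ∞`. -/
theorem harmonic_measure_moment_bound (u v : ℝ) (hu : 0 ≤ u) (hv : 0 ≤ v)
    (p : ℝ) (hp1 : 1 ≤ p) (hp2 : p < 2) :
    (∫⁻ z, ENNReal.ofReal (z.1 ^ p) ∂(Qmeas (u, v))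
      ≤ ENNReal.ofReal (|u ^ 2 - v ^ 2| ^ (p / 2)
          + (2 : ℝ) ^ (p / 2) * (u * v) ^ (p / 2) / Real.cos (p * Real.pi / 4))) ∧
    (∫⁻ z, ENNReal.ofReal (z.2 ^ p) ∂(Qmeas (u, v))
      ≤ ENNReal.ofReal (|u ^ 2 - v ^ 2| ^ (p / 2)
          + (2 : ℝ) ^ (p / 2) * (u * v) ^ (p / 2) / Real.cos (p * Real.pi / 4))) := by
  have hp0 : 0 < p := by linarith
  refine ⟨lintegral_fst_rpow_Qmeas_le hu hv hp0 hp2, ?_⟩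
  have h := lintegral_fst_rpow_Qmeas_le hv hu hp0 hp2
  rwa [← Prod.swap_prod_mk, ← map_swap_Qmeas, lintegral_map (by fun_prop) measurable_swap,
    abs_sub_comm, mul_comm v u] at h
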